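/- If H is a connected graph of order n and G = (H ∘ K_1) ∘ K_1, then th_pd×(G) = 2n = |V(G)|/2. -/

import Mathlib

open SimpleGraph Set

variable {V : Type*} {W : Type*}

/-- The closed neighborhood of a set `S`. -/
def closedNbhdSet (G : SimpleGraph V) (S : Set V) : Set V :=
  S ∪ {w | ∃ u ∈ S, G.Adj u w}

/-- One round of the zero forcing propagation step. -/
def pdStep (G : SimpleGraph V) (A : Set V) : Set V :=
  A ∪ {w | ∃ u ∈ A, G.neighborSet u \ A = {w}}

/-- `obs G S k` is the set `P^[k](S)` of vertices observed after round `k`. -/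
def obs (G : SimpleGraph V) (S : Set V) : ℕ → Set V
  | 0 => S
  | 1 => closedNbhdSet G S
  | (n + 2) => pdStep G (obs G S (n + 1))

/-- `S` is a power dominating set. -/
def IsPDS (G : SimpleGraph V) (S : Set V) : Prop :=
  ∃ t, obs G S t = Set.univ

/-- The power propagation time `pt_pd(G;S)`: least positive `t` with `P^[t](S) = V(G)`. -/
noncomputable def ptpd (G : SimpleGraph V) (S : Set V) : ℕ :=
  sInf {t | 1 ≤ t ∧ obs G S t = Set.univ}

/-- `S` is a dominating set. -/
def IsDomSet (G : SimpleGraph V) (S : Set V) : Prop :=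
  closedNbhdSet G S = Set.univ

/-- The domination number `γ(G)`. -/
noncomputable def gamma (G : SimpleGraph V) : ℕ :=
  sInf {k | ∃ S : Set V, IsDomSet G S ∧ S.ncard = k}

/-- The power domination number `γ_P(G)`. -/
noncomputable def gammaP (G : SimpleGraph V) : ℕ :=
  sInf {k | ∃ S : Set V, IsPDS G S ∧ S.ncard = k}

/-- The product power throttling number `th_pd^×(G)`. -/
noncomputable def thpd (G : SimpleGraph V) : ℕ :=
  sInf {m | ∃ S : Set V, IsPDS G S ∧ m = S.ncard * ptpd G S}

/-- The power propagation time of `G`: minimum over minimum power dominating sets. -/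
noncomputable def ptG (G : SimpleGraph V) : ℕ :=
  sInf {t | ∃ S : Set V, IsPDS G S ∧ S.ncard = gammaP G ∧ t = ptpd G S}

/-- `newObs G S k` is `P^(k)(S)`, the set of vertices first observed in round `k`. -/
def newObs (G : SimpleGraph V) (S : Set V) : ℕ → Set V
  | 0 => S
  | (k + 1) => obs G S (k + 1) \ obs G S k

/-- `rd G S v` is the round in which `v` is first observed. -/
noncomputable def rd (G : SimpleGraph V) (S : Set V) (v : V) : ℕ :=
  sInf {k | v ∈ obs G S k}

/-- The corona `H ∘ K_1`: append one leaf to each vertex of `H`. -/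
def corona (H : SimpleGraph V) : SimpleGraph (V ⊕ V) where
  Adj x y :=
    match x, y with
    | Sum.inl u, Sum.inl v => H.Adj u v
    | Sum.inl u, Sum.inr v => u = v
    | Sum.inr u, Sum.inl v => u = v
    | Sum.inr _, Sum.inr _ => False
  symm := by
    constructor
    rintro (u | u) (v | v) h
    · exact h.symm
    · exact h.symm
    · exact h.symm
    · exact h
  loopless := by
    constructor
    rintro (u | u) h
    · exact (H.ne_of_adj h) rfl
    · exact h

/-!
With the `n` vertices of `H` as `S`, the first round observes everything except the leaves of the
leaves of `H ∘ K_1`, and each of those is forced in the second round by its unique unobserved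
neighbour; so `n · 2` is attained. Conversely, over each vertex `v` of `H` hangs a path
`b – v – c – d` (`b` the leaf of `v`, `c` its leaf in `H ∘ K_1`, `d` the leaf of `c`), and
`{b, c, d}` is a fort, so every power dominating set meets each of these `n` disjoint paths.
A power dominating set of propagation time `1` dominates `G`, and every leaf of `G` needs itself
or its neighbour, so it has at least `2n` vertices.
-/

section PowerDomination

variable (G : SimpleGraph V) {S : Set V}

/-- A fort: every vertex outside `F` has no neighbour or at least two neighbours in `F`. -/
def IsFort (F : Set V) : Prop :=
  ∀ u ∉ F, ∀ w ∈ F, G.Adj u w → ∃ w' ∈ F, w' ≠ w ∧ G.Adj u w'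

lemma obs_subset_obs_succ (S : Set V) : ∀ k, obs G S k ⊆ obs G S (k + 1)
  | 0 => subset_union_left
  | _ + 1 => subset_union_left

variable {G}

lemma IsPDS.ptpd_spec (hS : IsPDS G S) : 1 ≤ ptpd G S ∧ obs G S (ptpd G S) = univ := by
  obtain ⟨t, ht⟩ := hS
  exact Nat.sInf_mem (s := {t | 1 ≤ t ∧ obs G S t = univ})
    ⟨t + 1, Nat.le_add_left 1 t, eq_univ_of_univ_subset (ht ▸ obs_subset_obs_succ G S t)⟩

lemma ptpd_le {t : ℕ} (ht : 1 ≤ t) (h : obs G S t = univ) : ptpd G S ≤ t :=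
  Nat.sInf_le ⟨ht, h⟩

lemma thpd_le (hS : IsPDS G S) : thpd G ≤ S.ncard * ptpd G S :=
  Nat.sInf_le ⟨S, hS, rfl⟩

lemma le_thpd {m : ℕ} (h : ∀ S, IsPDS G S → m ≤ S.ncard * ptpd G S) : m ≤ thpd G := by
  refine le_csInf ⟨univ.ncard * ptpd G univ, univ, ⟨0, rfl⟩, rfl⟩ ?_
  rintro _ ⟨S, hS, rfl⟩
  exact h S hS

variable {F : Set V}

lemma IsFort.disjoint_pdStep (hF : IsFort G F) {A : Set V} (hA : Disjoint A F) :
    Disjoint (pdStep G A) F := by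
  refine disjoint_left.2 fun w hw hwF => ?_
  rcases hw with hwA | ⟨u, huA, hu⟩
  · exact disjoint_left.1 hA hwA hwF
  · have huw : G.Adj u w := (hu.symm.subset rfl).1
    obtain ⟨w', hw'F, hw'w, huw'⟩ := hF u (disjoint_left.1 hA huA) w hwF huw
    exact hw'w (hu.subset ⟨huw', disjoint_right.1 hA hw'F⟩)

lemma IsFort.disjoint_obs (hF : IsFort G F) (hS : Disjoint (closedNbhdSet G S) F) :
    ∀ k, Disjoint (obs G S k) F
  | 0 => hS.mono_left subset_union_left
  | 1 => hS
  | k + 2 => hF.disjoint_pdStep (hF.disjoint_obs hS (k + 1))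

lemma IsFort.not_disjoint_closedNbhdSet (hF : IsFort G F) (hne : F.Nonempty)
    (hS : IsPDS G S) : ¬ Disjoint (closedNbhdSet G S) F := fun hdisj => by
  obtain ⟨t, ht⟩ := hS
  have := hF.disjoint_obs hdisj t
  rw [ht, univ_disjoint] at this
  exact hne.ne_empty this

end PowerDomination

section Corona

variable {K : SimpleGraph W}

/-- The vertex of `K` over which a vertex of `corona K` sits. -/
def coronaBase : W ⊕ W → W := Sum.elim id id

lemma corona_isDomSet_range_inl (K : SimpleGraph W) : IsDomSet (corona K) (range Sum.inl) := by
  refine eq_univ_of_forall fun x => ?_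
  rcases x with w | w
  · exact Or.inl ⟨w, rfl⟩
  · exact Or.inr ⟨Sum.inl w, ⟨w, rfl⟩, rfl⟩

lemma coronaBase_image_eq_univ {S : Set (W ⊕ W)} (hS : IsDomSet (corona K) S) :
    coronaBase '' S = univ := by
  refine eq_univ_of_forall fun w => ?_
  rcases (hS ▸ mem_univ (Sum.inr w) : Sum.inr w ∈ closedNbhdSet (corona K) S) with
    h | ⟨u | u, hu, huw⟩
  · exact ⟨_, h, rfl⟩
  · exact ⟨_, hu, (huw : u = w)⟩
  · exact huw.elim

lemma card_le_ncard_of_isDomSet_corona [Fintype W] {S : Set (W ⊕ W)}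
    (hS : IsDomSet (corona K) S) : Fintype.card W ≤ S.ncard := by
  calc Fintype.card W = (coronaBase '' S).ncard := by
        rw [coronaBase_image_eq_univ hS, ncard_univ, Nat.card_eq_fintype_card]
    _ ≤ S.ncard := ncard_image_le

lemma obs_corona_image_inl_two {D : Set W} (hD : IsDomSet K D) :
    obs (corona K) (Sum.inl '' D) 2 = univ := by
  have hinl : ∀ w, Sum.inl w ∈ obs (corona K) (Sum.inl '' D) 1 := fun w => by
    rcases (hD ▸ mem_univ w : w ∈ closedNbhdSet K D) with h | ⟨u, hu, huw⟩
    · exact Or.inl ⟨w, h, rfl⟩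
    · exact Or.inr ⟨Sum.inl u, ⟨u, hu, rfl⟩, huw⟩
  refine eq_univ_of_forall fun x => ?_
  by_cases hx : x ∈ obs (corona K) (Sum.inl '' D) 1
  · exact Or.inl hx
  rcases x with w | w
  · exact (hx (hinl w)).elim
  refine Or.inr ⟨Sum.inl w, hinl w, eq_singleton_iff_unique_mem.2 ⟨⟨rfl, hx⟩, ?_⟩⟩
  rintro (u | u) ⟨hwu, hu⟩
  · exact (hu (hinl u)).elim
  · exact congrArg Sum.inr (Eq.symm hwu)

variable {x y : W}

lemma isFort_corona_pendant (hy : ∀ z, K.Adj y z ↔ z = x) :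
    IsFort (corona K) {Sum.inr x, Sum.inl y, Sum.inr y} := by
  have hxy : K.Adj x y := ((hy x).2 rfl).symm
  rintro (u | u) hu w hw huw <;> simp only [mem_insert_iff, mem_singleton_iff] at hu hw
  · rcases hw with rfl | rfl | rfl
    · obtain rfl : u = x := huw
      exact ⟨Sum.inl y, by simp, Sum.inl_ne_inr, hxy⟩
    · obtain rfl : u = x := (hy u).1 huw.symm
      exact ⟨Sum.inr u, by simp, Sum.inr_ne_inl, rfl⟩
    · exact (hu (Or.inr (Or.inl (congrArg Sum.inl huw)))).elim
  · rcases hw with rfl | rfl | rfl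
    · exact huw.elim
    · exact (hu (Or.inr (Or.inr (congrArg Sum.inr (huw : u = y))))).elim
    · exact huw.elim

lemma IsPDS.exists_coronaBase_mem_pendant {S : Set (W ⊕ W)} (hS : IsPDS (corona K) S)
    (hy : ∀ z, K.Adj y z ↔ z = x) : ∃ u ∈ S, coronaBase u = x ∨ coronaBase u = y := by
  obtain ⟨w, hwS, hw⟩ := not_disjoint_iff.1 <|
    (isFort_corona_pendant hy).not_disjoint_closedNbhdSet (by simp) hS
  simp only [mem_insert_iff, mem_singleton_iff] at hw
  rcases hwS with hwS | ⟨u | u, hu, huw⟩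
  · refine ⟨w, hwS, ?_⟩
    rcases hw with rfl | rfl | rfl <;> simp [coronaBase]
  · refine ⟨_, hu, ?_⟩
    rcases hw with rfl | rfl | rfl
    · exact Or.inl huw
    · exact Or.inl ((hy u).1 huw.symm)
    · exact Or.inr huw
  · refine ⟨_, hu, ?_⟩
    rcases hw with rfl | rfl | rfl
    · exact huw.elim
    · exact Or.inr huw
    · exact huw.elim

end Corona

section DoubleCorona

variable [Fintype V] {H : SimpleGraph V}

lemma thpd_corona_corona_le : thpd (corona (corona H)) ≤ Fintype.card V * 2 := by
  have hS₀ := obs_corona_image_inl_two (corona_isDomSet_range_inl H)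
  calc thpd _ ≤ (Sum.inl '' range Sum.inl).ncard * ptpd _ (Sum.inl '' range Sum.inl) :=
        thpd_le ⟨2, hS₀⟩
    _ ≤ Fintype.card V * 2 := by
      gcongr
      · rw [ncard_image_of_injective _ Sum.inl_injective,
          ncard_range_of_injective Sum.inl_injective, Nat.card_eq_fintype_card]
      · exact ptpd_le one_le_two hS₀

lemma card_le_ncard_of_isPDS_corona_corona {S : Set ((V ⊕ V) ⊕ (V ⊕ V))}
    (hS : IsPDS (corona (corona H)) S) : Fintype.card V ≤ S.ncard := by
  have himage : (coronaBase ∘ coronaBase) '' S = univ := by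
    refine eq_univ_of_forall fun v => ?_
    obtain ⟨u, hu, hbase⟩ := hS.exists_coronaBase_mem_pendant (x := Sum.inl v) (y := Sum.inr v)
      (by rintro (z | z) <;> simp [corona, eq_comm])
    refine ⟨u, hu, ?_⟩
    rcases hbase with h | h <;> exact congrArg coronaBase h
  calc Fintype.card V = ((coronaBase ∘ coronaBase) '' S).ncard := by
        rw [himage, ncard_univ, Nat.card_eq_fintype_card]
    _ ≤ S.ncard := ncard_image_le

lemma card_mul_two_le_ncard_mul_ptpd {S : Set ((V ⊕ V) ⊕ (V ⊕ V))}
    (hS : IsPDS (corona (corona H)) S) :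
    Fintype.card V * 2 ≤ S.ncard * ptpd (corona (corona H)) S := by
  obtain ⟨hpt, hobs⟩ := hS.ptpd_spec
  obtain h1 | h2 : ptpd (corona (corona H)) S = 1 ∨ 2 ≤ ptpd (corona (corona H)) S := by omega
  · have hdom := card_le_ncard_of_isDomSet_corona (h1 ▸ hobs : obs _ S 1 = univ)
    rw [Fintype.card_sum] at hdom
    rw [h1]
    omega
  · exact Nat.mul_le_mul (card_le_ncard_of_isPDS_corona_corona hS) h2

end DoubleCorona

theorem stmt14_general [Fintype V] (H : SimpleGraph V) :
    thpd (corona (corona H)) = 2 * Fintype.card V ∧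
      2 * thpd (corona (corona H)) = Fintype.card ((V ⊕ V) ⊕ (V ⊕ V)) := by
  have hth : thpd (corona (corona H)) = 2 * Fintype.card V := by
    rw [mul_comm]
    exact le_antisymm thpd_corona_corona_le (le_thpd fun _ => card_mul_two_le_ncard_mul_ptpd)
  refine ⟨hth, ?_⟩
  simp only [hth, Fintype.card_sum]
  ring

theorem stmt14 [Fintype V] (H : SimpleGraph V) (hH : H.Connected) :
    thpd (corona (corona H)) = 2 * Fintype.card V ∧
      2 * thpd (corona (corona H)) = Fintype.card ((V ⊕ V) ⊕ (V ⊕ V)) :=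
  stmt14_general H
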